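/- Let R be a positive random variable on some probability space such that log R is Gaussian with variance V² (V > 0) and E[R] = P₂/P₁ for positive constants P₁, P₂, and let K > 0. Then P₁·E[max(R − K, 0)] = P₂·N(h) − K·P₁·N(h − V) and P₁·E[max(K − R, 0)] = −P₂·N(−h) + K·P₁·N(V − h), where h = (1/V)·log(P₂/(P₁·K)) + V/2 and N is the standard normal cumulative distribution function. -/

import Mathlib

/-!
Write `log R ~ N(m, V²)`. The Gaussian moment generating function gives `E[R] = exp (m + V²/2)`,
which the mean condition identifies with the forward price `P₂/P₁`. The put payoff is
`(K - exp x)` on `{x ≤ log K}`; completing the square, the `N(m, V²)` density times `exp x` is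
`exp (m + V²/2)` times the `N(m + V², V²)` density, so both pieces of the put price are
values of the normal CDF after standardising. The call then follows from put–call parity
`max (R - K) 0 = R - K + max (K - R) 0` and the symmetry `N(-x) = 1 - N(x)`.
-/

open MeasureTheory ProbabilityTheory
open scoped NNReal

/-- The standard normal cumulative distribution function. -/
noncomputable def stdNormalCDF (x : ℝ) : ℝ :=
  ∫ t in Set.Iic x, (Real.sqrt (2 * Real.pi))⁻¹ * Real.exp (-t ^ 2 / 2)

open Real Set

lemma stdNormalCDF_eq_gaussianReal_real_Iic (y : ℝ) :
    stdNormalCDF y = (gaussianReal 0 1).real (Iic y) := by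
  rw [measureReal_def, gaussianReal_apply_eq_integral 0 one_ne_zero,
    ENNReal.toReal_ofReal (setIntegral_nonneg measurableSet_Iic fun x _ ↦
      gaussianPDFReal_nonneg _ _ x)]
  simp [stdNormalCDF, gaussianPDFReal]

lemma stdNormalCDF_neg (y : ℝ) : stdNormalCDF (-y) = 1 - stdNormalCDF y := by
  have hsymm : (gaussianReal 0 1).map (fun x ↦ -x) = gaussianReal 0 1 := by
    simpa using gaussianReal_map_neg (μ := 0) (v := 1)
  have := nullSingletonClass_gaussianReal (μ := 0) one_ne_zero
  rw [stdNormalCDF_eq_gaussianReal_real_Iic, stdNormalCDF_eq_gaussianReal_real_Iic, ← hsymm,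
    map_measureReal_apply measurable_neg measurableSet_Iic, hsymm, neg_preimage, neg_Iic, neg_neg,
    measureReal_congr Ioi_ae_eq_Ici.symm, ← compl_Iic,
    probReal_compl_eq_one_sub measurableSet_Iic]

lemma gaussianReal_real_Iic (m : ℝ) {v : ℝ≥0} (hv : v ≠ 0) (a : ℝ) :
    (gaussianReal m v).real (Iic a) = stdNormalCDF ((a - m) / √v) := by
  have hσ : 0 < √(v : ℝ) := by positivity
  have hstd : (gaussianReal m v).map (fun x ↦ (x - m) / √v) = gaussianReal 0 1 := by
    have hcomp : (fun x ↦ (x - m) / √v) = (· / √v) ∘ (· - m) := rfl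
    rw [hcomp, ← Measure.map_map (by fun_prop) (by fun_prop), gaussianReal_map_sub_const,
      gaussianReal_map_div_const, sub_self, zero_div]
    congr
    ext
    simp [hv]
  have hpre : (fun x ↦ (x - m) / √v) ⁻¹' Iic ((a - m) / √v) = Iic a := by
    ext x
    simp [div_le_div_iff_of_pos_right hσ]
  rw [stdNormalCDF_eq_gaussianReal_real_Iic, ← hstd,
    map_measureReal_apply (by fun_prop) measurableSet_Iic, hpre]

lemma integrable_exp_gaussianReal (m : ℝ) (v : ℝ≥0) : Integrable exp (gaussianReal m v) := by
  simpa using integrable_exp_mul_gaussianReal (μ := m) (v := v) 1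

lemma integral_exp_gaussianReal (m : ℝ) (v : ℝ≥0) :
    ∫ x, exp x ∂gaussianReal m v = exp (m + v / 2) := by
  simpa [mgf] using congrFun (mgf_id_gaussianReal (μ := m) (v := v)) 1

lemma gaussianPDFReal_mul_exp (m : ℝ) (v : ℝ≥0) (x : ℝ) :
    gaussianPDFReal m v x * exp x = exp (m + v / 2) * gaussianPDFReal (m + v) v x := by
  rcases eq_or_ne v 0 with rfl | hv
  · simp [gaussianPDFReal]
  have hv' : (v : ℝ) ≠ 0 := by exact_mod_cast hv
  have hexp : -(x - m) ^ 2 / (2 * v) + x = (m + v / 2) + -(x - (m + v)) ^ 2 / (2 * v) := by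
    field_simp
    ring
  simp only [gaussianPDFReal]
  rw [mul_assoc, ← exp_add, hexp, exp_add]
  ring

lemma setIntegral_exp_gaussianReal (m : ℝ) {v : ℝ≥0} (hv : v ≠ 0) {s : Set ℝ}
    (hs : MeasurableSet s) :
    ∫ x in s, exp x ∂gaussianReal m v = exp (m + v / 2) * (gaussianReal (m + v) v).real s := by
  rw [← integral_indicator hs, integral_gaussianReal_eq_integral_smul hv, measureReal_def,
    gaussianReal_apply_eq_integral _ hv, ENNReal.toReal_ofReal (setIntegral_nonneg hs fun x _ ↦
      gaussianPDFReal_nonneg _ _ x), ← integral_const_mul, ← integral_indicator hs]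
  congr 1 with x
  by_cases hx : x ∈ s <;> simp [hx, gaussianPDFReal_mul_exp]

lemma integral_max_const_sub_exp_gaussianReal (m : ℝ) {v : ℝ≥0} (hv : v ≠ 0) {K : ℝ}
    (hK : 0 < K) :
    ∫ x, max (K - exp x) 0 ∂gaussianReal m v =
      K * stdNormalCDF (√v - (m + v - log K) / √v)
        - exp (m + v / 2) * stdNormalCDF (-((m + v - log K) / √v)) := by
  have hpayoff : (fun x ↦ max (K - exp x) 0) = (Iic (log K)).indicator (fun x ↦ K - exp x) := by
    ext x
    by_cases hx : x ≤ log K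
    · have : exp x ≤ K := (exp_le_exp.2 hx).trans_eq (exp_log hK)
      simp [hx, this]
    · have : K ≤ exp x := (exp_log hK).symm.trans_le (exp_le_exp.2 (not_le.1 hx).le)
      simp [hx, this]
  rw [hpayoff, integral_indicator measurableSet_Iic,
    integral_sub (integrable_const K) (integrable_exp_gaussianReal m v).restrict,
    setIntegral_const, setIntegral_exp_gaussianReal m hv measurableSet_Iic,
    gaussianReal_real_Iic m hv, gaussianReal_real_Iic _ hv, smul_eq_mul, mul_comm]
  have hσ : 0 < √(v : ℝ) := by positivity
  have hσ2 : √(v : ℝ) ^ 2 = v := sq_sqrt v.2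
  congr 3 <;> field_simp <;> linarith

lemma integral_max_exp_sub_const_gaussianReal (m : ℝ) {v : ℝ≥0} (hv : v ≠ 0) {K : ℝ}
    (hK : 0 < K) :
    ∫ x, max (exp x - K) 0 ∂gaussianReal m v =
      exp (m + v / 2) * stdNormalCDF ((m + v - log K) / √v)
        - K * stdNormalCDF ((m + v - log K) / √v - √v) := by
  have hparity : (fun x ↦ max (exp x - K) 0) = fun x ↦ (exp x - K) + max (K - exp x) 0 := by
    ext x
    rcases le_total (exp x) K with h | h
    · rw [max_eq_right (by linarith), max_eq_left (by linarith)]; ring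
    · rw [max_eq_left (by linarith), max_eq_right (by linarith)]; ring
  have hput : Integrable (fun x ↦ max (K - exp x) 0) (gaussianReal m v) :=
    (integrable_const K).mono' (by fun_prop) (ae_of_all _ fun x ↦ by
      rw [Real.norm_of_nonneg (le_max_right _ _)]
      exact max_le (by linarith [exp_pos x]) hK.le)
  have hexpK : Integrable (fun x ↦ exp x - K) (gaussianReal m v) :=
    (integrable_exp_gaussianReal m v).sub (integrable_const K)
  rw [hparity, integral_add hexpK hput,
    integral_sub (integrable_exp_gaussianReal m v) (integrable_const K), integral_const,
    integral_exp_gaussianReal, integral_max_const_sub_exp_gaussianReal m hv hK,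
    stdNormalCDF_neg, ← neg_sub ((m + v - log K) / √v), stdNormalCDF_neg]
  simp only [probReal_univ, smul_eq_mul, one_mul]
  ring

lemma integral_comp_eq_integral_comp_exp {Ω : Type*} [MeasurableSpace Ω] {P : Measure Ω}
    {R : Ω → ℝ} (hR : ∀ ω, 0 < R ω) {μ : Measure ℝ} [NeZero μ]
    (hlaw : P.map (fun ω ↦ log (R ω)) = μ) {g : ℝ → ℝ} (hg : Measurable g) :
    ∫ ω, g (R ω) ∂P = ∫ x, g (exp x) ∂μ := by
  have hX : AEMeasurable (fun ω ↦ log (R ω)) P :=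
    aemeasurable_of_map_neZero (hlaw ▸ inferInstance)
  rw [← hlaw, integral_map (f := fun x ↦ g (exp x)) hX
    (hg.comp measurable_exp).aestronglyMeasurable]
  simp only [exp_log (hR _)]

theorem zero_coupon_bond_option_formula_general
    {Ω : Type*} [MeasurableSpace Ω] (P : Measure Ω)
    (R : Ω → ℝ) (hRpos : ∀ ω, 0 < R ω)
    (V : ℝ) (hV : 0 < V)
    (hlaw : ∃ m : ℝ, Measure.map (fun ω => Real.log (R ω)) P =
      gaussianReal m (⟨V ^ 2, sq_nonneg V⟩ : ℝ≥0))
    (P₁ P₂ : ℝ) (hP₁ : 0 < P₁) (hP₂ : 0 < P₂)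
    (hmean : ∫ ω, R ω ∂P = P₂ / P₁)
    (K : ℝ) (hK : 0 < K) :
    P₁ * ∫ ω, max (R ω - K) 0 ∂P =
        P₂ * stdNormalCDF ((1 / V) * Real.log (P₂ / (P₁ * K)) + V / 2)
          - K * P₁ * stdNormalCDF ((1 / V) * Real.log (P₂ / (P₁ * K)) + V / 2 - V) ∧
      P₁ * ∫ ω, max (K - R ω) 0 ∂P =
        -(P₂ * stdNormalCDF (-((1 / V) * Real.log (P₂ / (P₁ * K)) + V / 2)))
          + K * P₁ * stdNormalCDF (V - ((1 / V) * Real.log (P₂ / (P₁ * K)) + V / 2)) := by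
  obtain ⟨m, hlaw⟩ := hlaw
  set v : ℝ≥0 := ⟨V ^ 2, sq_nonneg V⟩
  have hvV : (v : ℝ) = V ^ 2 := rfl
  have hv : v ≠ 0 := by rw [Ne, ← NNReal.coe_eq_zero, hvV]; positivity
  have hσ : √(v : ℝ) = V := sqrt_sq hV.le
  have hforward : exp (m + v / 2) = P₂ / P₁ := by
    rw [← hmean, integral_comp_eq_integral_comp_exp hRpos hlaw (g := fun r ↦ r) measurable_id,
      integral_exp_gaussianReal]
  set h := (1 / V) * log (P₂ / (P₁ * K)) + V / 2 with hh
  have hd : (m + v - log K) / √v = h := by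
    have hm : m = log (P₂ / P₁) - V ^ 2 / 2 := by
      rw [← hforward, log_exp, hvV]; ring
    rw [hh, hσ, hm, hvV, ← div_div, log_div (by positivity) hK.ne']
    field_simp
    ring
  rw [integral_comp_eq_integral_comp_exp hRpos hlaw (g := fun r ↦ max (r - K) 0) (by fun_prop),
    integral_comp_eq_integral_comp_exp hRpos hlaw (g := fun r ↦ max (K - r) 0) (by fun_prop),
    integral_max_exp_sub_const_gaussianReal m hv hK,
    integral_max_const_sub_exp_gaussianReal m hv hK, hd, hσ, hforward]
  constructor
  · field_simp
  · field_simp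
    ring

/-- Zero-coupon bond option (ZBO) Black-type formulas: if `R` is a
positive lognormal random variable with log-variance `V²` and mean `P₂/P₁`, then the
call and put prices have the stated form. -/
theorem zero_coupon_bond_option_formula
    {Ω : Type*} [MeasurableSpace Ω] (P : Measure Ω) [IsProbabilityMeasure P]
    (R : Ω → ℝ) (hRpos : ∀ ω, 0 < R ω)
    (V : ℝ) (hV : 0 < V)
    (hlaw : ∃ m : ℝ, Measure.map (fun ω => Real.log (R ω)) P =
      gaussianReal m (⟨V ^ 2, sq_nonneg V⟩ : ℝ≥0))
    (P₁ P₂ : ℝ) (hP₁ : 0 < P₁) (hP₂ : 0 < P₂)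
    (hmean : ∫ ω, R ω ∂P = P₂ / P₁)
    (K : ℝ) (hK : 0 < K) :
    P₁ * ∫ ω, max (R ω - K) 0 ∂P =
        P₂ * stdNormalCDF ((1 / V) * Real.log (P₂ / (P₁ * K)) + V / 2)
          - K * P₁ * stdNormalCDF ((1 / V) * Real.log (P₂ / (P₁ * K)) + V / 2 - V) ∧
      P₁ * ∫ ω, max (K - R ω) 0 ∂P =
        -(P₂ * stdNormalCDF (-((1 / V) * Real.log (P₂ / (P₁ * K)) + V / 2)))
          + K * P₁ * stdNormalCDF (V - ((1 / V) * Real.log (P₂ / (P₁ * K)) + V / 2)) :=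
  zero_coupon_bond_option_formula_general P R hRpos V hV hlaw P₁ P₂ hP₁ hP₂ hmean K hK
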